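/- arXiv:math/9201236 — 10 statements merged into one kernel-verified Lean document; each statement's English description precedes it below -/
import Mathlib

section
/- Let (M, d₁) be a complete metric space and let d₂ be a metric on M with d₁(x,y) ≤ d₂(x,y) for all x, y ∈ M. If every d₂-closed ball in M is also d₁-closed, then (M, d₂) is a complete metric space. -/
lemma aux0 {M : Type*} (m : MetricSpace M) (S : Set M)
    (u : ℕ → M) (x : M)
    (hS : @IsClosed M m.toUniformSpace.toTopologicalSpace S)
    (hx : Filter.Tendsto u Filter.atTop (@nhds M m.toUniformSpace.toTopologicalSpace x))
    (h : ∀ᶠ m in Filter.atTop, u m ∈ S) : x ∈ S := by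
  letI := m
  exact hS.mem_of_tendsto hx h

/-- If `(M, d₁)` is complete, `d₁ ≤ d₂`, and every `d₂`-closed ball is
`d₁`-closed, then `(M, d₂)` is complete. -/
theorem stmt0 {M : Type*} (m₁ m₂ : MetricSpace M)
    (hle : ∀ x y : M, @dist M m₁.toDist x y ≤ @dist M m₂.toDist x y)
    (hcompl : @CompleteSpace M m₁.toUniformSpace)
    (hballs : ∀ (x : M) (r : ℝ),
      @IsClosed M m₁.toUniformSpace.toTopologicalSpace {y | @dist M m₂.toDist x y ≤ r}) :
    @CompleteSpace M m₂.toUniformSpace := by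
  apply @Metric.complete_of_cauchySeq_tendsto M m₂.toPseudoMetricSpace
  intro u hu
  -- u is Cauchy for d₂, hence for d₁
  have hu2 := (@Metric.cauchySeq_iff M ℕ m₂.toPseudoMetricSpace _ _ (u := u)).1 hu
  have hu1 : @CauchySeq M ℕ m₁.toUniformSpace _ u := by
    rw [@Metric.cauchySeq_iff M ℕ m₁.toPseudoMetricSpace _ _ (u := u)]
    intro ε hε
    obtain ⟨N, hN⟩ := hu2 ε hε
    exact ⟨N, fun m hm n hn => lt_of_le_of_lt (hle _ _) (hN m hm n hn)⟩
  obtain ⟨x, hx⟩ := @cauchySeq_tendsto_of_complete M ℕ m₁.toUniformSpace _ hcompl (u := u) hu1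
  refine ⟨x, ?_⟩
  rw [@Metric.tendsto_atTop M ℕ m₂.toPseudoMetricSpace _ _ (u := u) (a := x)]
  intro ε hε
  obtain ⟨N, hN⟩ := hu2 (ε / 2) (by linarith)
  refine ⟨N, fun n hn => ?_⟩
  have hx_mem : x ∈ {y | @dist M m₂.toDist (u n) y ≤ ε / 2} := by
    refine @aux0 M m₁ _ u x (hballs (u n) (ε / 2)) hx ?_
    filter_upwards [Filter.eventually_ge_atTop N] with m hm
    exact le_of_lt (hN n hn m hm)
  have : @dist M m₂.toDist (u n) x ≤ ε / 2 := hx_mem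
  calc @dist M m₂.toDist (u n) x ≤ ε / 2 := this
    _ < ε := by linarith
end

section
/- Let K be a compact metric space and A ⊆ K be both an Fσ set and a Gδ set. Then there exists a uniformly bounded sequence (fₙ) of continuous functions on K such that for every k ∈ K there exists m with fₙ(k) = 1_A(k) for all n ≥ m; in other words, 1_A is the pointwise limit of a pointwise stabilizing sequence of continuous functions. -/
/-!
Take closed sets `Fₙ` with union `A` and open sets `Gₙ` with intersection `A`. At stage `n`,
Urysohn's lemma gives a continuous `fₙ : K → [0, 1]` equal to `1` on `F₀ ∪ ⋯ ∪ Fₙ` and to `0`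
on `G₀ᶜ ∪ ⋯ ∪ Gₙᶜ`; these finite unions are closed and disjoint, the first lying in `A` and the
second in `Aᶜ`. A point of `A` lies in some `Fₘ` and a point outside `A` outside some `Gₘ`,
so in either case `fₙ` agrees with `1_A` there from `n = m` on.
-/

open Filter Set

theorem eventually_mem_accumulate {α β : Type*} [Preorder α] {s : α → Set β} {x : β}
    (hx : x ∈ ⋃ i, s i) : ∀ᶠ i in atTop, x ∈ accumulate s i := by
  obtain ⟨m, hm⟩ := mem_iUnion.1 hx
  filter_upwards [eventually_ge_atTop m] with i hi
  exact monotone_accumulate hi (subset_accumulate hm)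

section

variable {X : Type*} [TopologicalSpace X]

theorem isClosed_accumulate {F : ℕ → Set X} (hF : ∀ n, IsClosed (F n)) (n : ℕ) :
    IsClosed (accumulate F n) :=
  (finite_le_nat n).isClosed_biUnion fun i _ => hF i

theorem exists_continuous_eventually_eq_indicator [NormalSpace X] {A : Set X} {F G : ℕ → Set X}
    (hF : ∀ n, IsClosed (F n)) (hG : ∀ n, IsOpen (G n)) (hFA : A = ⋃ n, F n)
    (hGA : A = ⋂ n, G n) :
    ∃ f : ℕ → C(X, ℝ), (∀ n x, f n x ∈ Icc (0 : ℝ) 1) ∧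
      ∀ x, ∀ᶠ n in atTop, f n x = A.indicator (fun _ => 1) x := by
  have hGc : Aᶜ = ⋃ n, (G n)ᶜ := by rw [hGA, compl_iInter]
  have hdisj (n : ℕ) : Disjoint (accumulate (fun i => (G i)ᶜ) n) (accumulate F n) :=
    disjoint_compl_left.mono (hGc ▸ accumulate_subset_iUnion n)
      (hFA ▸ accumulate_subset_iUnion n)
  choose f hf0 hf1 hf01 using fun n => exists_continuous_zero_one_of_isClosed
    (isClosed_accumulate (fun i => (hG i).isClosed_compl) n) (isClosed_accumulate hF n) (hdisj n)
  refine ⟨f, hf01, fun x => ?_⟩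
  by_cases hx : x ∈ A
  · filter_upwards [eventually_mem_accumulate (hFA ▸ hx)] with n hn
    rw [indicator_of_mem hx, hf1 n hn, Pi.one_apply]
  · filter_upwards [eventually_mem_accumulate (hGc ▸ mem_compl hx)] with n hn
    rw [indicator_of_notMem hx, hf0 n hn, Pi.zero_apply]

end

theorem stmt3_general {K : Type*} [MetricSpace K] (A : Set K)
    (hFσ : ∃ F : ℕ → Set K, (∀ n, IsClosed (F n)) ∧ A = ⋃ n, F n)
    (hGδ : ∃ G : ℕ → Set K, (∀ n, IsOpen (G n)) ∧ A = ⋂ n, G n) :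
    ∃ f : ℕ → K → ℝ, (∀ n, Continuous (f n)) ∧
      (∃ C : ℝ, ∀ n k, |f n k| ≤ C) ∧
      (∀ k, ∃ m : ℕ, ∀ n ≥ m, f n k = A.indicator (fun _ => (1 : ℝ)) k) ∧
      (∀ k, Tendsto (fun n => f n k) atTop (nhds (A.indicator (fun _ => (1 : ℝ)) k))) := by
  obtain ⟨F, hF, hFA⟩ := hFσ
  obtain ⟨G, hG, hGA⟩ := hGδ
  obtain ⟨f, hf01, hfA⟩ := exists_continuous_eventually_eq_indicator hF hG hFA hGA
  refine ⟨fun n => f n, fun n => (f n).continuous, ⟨1, fun n k => ?_⟩,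
    fun k => eventually_atTop.1 (hfA k),
    fun k => tendsto_const_nhds.congr' (EventuallyEq.symm (hfA k))⟩
  exact (abs_of_nonneg (hf01 n k).1).trans_le (hf01 n k).2

/-- If `A ⊆ K` is both `Fσ` and `Gδ` in a compact metric space `K`, then
`1_A` is the pointwise limit of a uniformly bounded, pointwise stabilizing sequence
of continuous functions. -/
theorem stmt3 {K : Type*} [MetricSpace K] [CompactSpace K] (A : Set K)
    (hFσ : ∃ F : ℕ → Set K, (∀ n, IsClosed (F n)) ∧ A = ⋃ n, F n)
    (hGδ : ∃ G : ℕ → Set K, (∀ n, IsOpen (G n)) ∧ A = ⋂ n, G n) :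
    ∃ f : ℕ → K → ℝ, (∀ n, Continuous (f n)) ∧
      (∃ C : ℝ, ∀ n k, |f n k| ≤ C) ∧
      (∀ k, ∃ m : ℕ, ∀ n ≥ m, f n k = A.indicator (fun _ => (1 : ℝ)) k) ∧
      (∀ k, Tendsto (fun n => f n k) atTop (nhds (A.indicator (fun _ => (1 : ℝ)) k))) :=
  stmt3_general A hFσ hGδ
end

section
/- Let K be a compact metric space, F : K → ℝ bounded, δ > 0, and m ∈ ℕ. Define K₀(F,δ) = K and K_{α+1}(F,δ) = {k ∈ K_α(F,δ) : the oscillation of F restricted to K_α(F,δ) at k is ≥ δ}. If K_m(F,δ) ≠ ∅, then for every sequence (gₙ) ⊆ C(K) converging pointwise to F with g₀ ≡ 0, there exist a point k ∈ K and indices n₁ < n₂ < ⋯ < n_{m+1} such that |g_{n_{i+1}}(k) − g_{n_i}(k)| > δ/4 for all 1 ≤ i ≤ m. Consequently sup_k Σₙ |g_{n+1}(k) − gₙ(k)| ≥ mδ/4. -/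
open Filter

/-- The oscillation of `F` restricted to `L` at `x` is at least `δ`. -/
def oscGE {K : Type*} [TopologicalSpace K] (F : K → ℝ) (L : Set K) (x : K) (δ : ℝ) : Prop :=
  ∀ U ∈ nhds x, ∀ η < δ, ∃ y ∈ L ∩ U, ∃ z ∈ L ∩ U, η < F y - F z

/-- The oscillation derived sets `K_α(F, δ)` (finite stages). -/
def oscDerivedSet {K : Type*} [TopologicalSpace K] (F : K → ℝ) (δ : ℝ) : ℕ → Set K
  | 0 => Set.univ
  | n + 1 => {x ∈ oscDerivedSet F δ n | oscGE F (oscDerivedSet F δ n) x δ}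

/-!
Each point of `K_{j+1}(F, δ)` has, arbitrarily close to it, points of `K_j(F, δ)` at which `F`
differs from the continuous function `gₙ` by more than `δ/4`: otherwise the oscillation of `F`
on `K_j` would be at most `δ/2` plus the (small) local oscillation of `gₙ`. At such a point `w`
pointwise convergence gives a later index `n'` with `|g_{n'}(w) − gₙ(w)| > δ/4`, and by continuity
this jump persists on a neighbourhood of `w`, inside which we recurse into `K_j`. After `m` steps
this yields a single point carrying `m` jumps of size `δ/4`, and the triangle inequality turns them
into a lower bound `mδ/4` for the variation of `n ↦ gₙ(k)`.
-/

open Topology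

theorem exists_lt_abs_sub_of_oscGE {K : Type*} [TopologicalSpace K] {F h : K → ℝ} {L U : Set K}
    {x : K} {δ η : ℝ} (hosc : oscGE F L x δ) (hh : ContinuousAt h x) (hη : η < δ / 2)
    (hU : U ∈ 𝓝 x) : ∃ w ∈ L ∩ U, η < |F w - h w| := by
  have hε : 0 < (δ / 2 - η) / 2 := by linarith
  obtain ⟨y, ⟨hyL, hyU, hy⟩, z, ⟨hzL, hzU, hz⟩, hyz⟩ :=
    hosc _ (Filter.inter_mem hU (hh.preimage_mem_nhds (Metric.ball_mem_nhds _ hε)))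
      (δ / 2 + η) (by linarith)
  rw [Set.mem_preimage, Metric.mem_ball, Real.dist_eq, abs_lt] at hy hz
  by_contra! hle
  have hFy := abs_le.mp (hle y ⟨hyL, hyU⟩)
  have hFz := abs_le.mp (hle z ⟨hzL, hzU⟩)
  linarith [hy.1, hy.2, hz.1, hz.2, hFy.1, hFy.2, hFz.1, hFz.2]

theorem exists_gt_lt_abs_sub_of_tendsto {u : ℕ → ℝ} {a c : ℝ} (hu : Tendsto u atTop (𝓝 a))
    {n : ℕ} (hc : c < |a - u n|) : ∃ n' > n, c < |u n' - u n| :=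
  ((eventually_gt_atTop n).and
    (((continuous_abs.comp (continuous_sub_right (u n))).tendsto a).comp hu |>.eventually
      (lt_mem_nhds hc))).exists

theorem exists_jumps_of_mem_oscDerivedSet {K : Type*} [TopologicalSpace K] {F : K → ℝ} {δ : ℝ}
    (hδ : 0 < δ) {g : ℕ → K → ℝ} (hg : ∀ n, Continuous (g n))
    (hlim : ∀ k, Tendsto (fun n => g n k) atTop (𝓝 (F k))) (j : ℕ) :
    ∀ x ∈ oscDerivedSet F δ j, ∀ (n : ℕ), ∀ U ∈ 𝓝 x,
      ∃ y ∈ U, ∃ ns : Fin (j + 1) → ℕ, ns 0 = n ∧ StrictMono ns ∧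
        ∀ i : Fin j, δ / 4 < |g (ns i.succ) y - g (ns i.castSucc) y| := by
  induction j with
  | zero => exact fun x _ n U hU => ⟨x, mem_of_mem_nhds hU, fun _ => n, rfl,
      Fin.strictMono_iff_lt_succ.2 Fin.elim0, Fin.elim0⟩
  | succ j ih =>
    rintro x ⟨-, hosc⟩ n U hU
    obtain ⟨w, ⟨hwj, hwU⟩, hw⟩ :=
      exists_lt_abs_sub_of_oscGE hosc (hg n).continuousAt (by linarith : δ / 4 < δ / 2)
        (interior_mem_nhds.2 hU)
    obtain ⟨n', hnn', hjump⟩ := exists_gt_lt_abs_sub_of_tendsto (hlim w) hw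
    have hV : U ∩ {y | δ / 4 < |g n' y - g n y|} ∈ 𝓝 w :=
      Filter.inter_mem (mem_interior_iff_mem_nhds.1 hwU)
        ((isOpen_lt continuous_const ((hg n').sub (hg n)).abs).mem_nhds hjump)
    obtain ⟨y, ⟨hyU, hy⟩, ns, rfl, hmono, hjumps⟩ := ih w hwj n' _ hV
    refine ⟨y, hyU, Fin.cons n ns, rfl,
      Fin.strictMono_cons.2 ⟨fun i => hnn'.trans_le (hmono.monotone (Fin.zero_le i)), hmono⟩,
      Fin.forall_fin_succ.2 ⟨by simpa using hy, fun i => ?_⟩⟩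
    simpa [← Fin.succ_castSucc] using hjumps i

theorem mul_le_sum_range_dist {α : Type*} [PseudoMetricSpace α] (u : ℕ → α) {c : ℝ} :
    ∀ {m : ℕ} {ns : Fin (m + 1) → ℕ}, Monotone ns →
      (∀ i : Fin m, c ≤ dist (u (ns i.castSucc)) (u (ns i.succ))) →
      m * c ≤ ∑ n ∈ Finset.range (ns (Fin.last m)), dist (u n) (u (n + 1))
  | 0, _, _, _ => by simpa using Finset.sum_nonneg fun n _ => dist_nonneg
  | m + 1, ns, hmono, hjump => by
    have hle : ns (Fin.last m).castSucc ≤ ns (Fin.last (m + 1)) := hmono (Fin.le_last _)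
    have hinit := mul_le_sum_range_dist u (ns := Fin.init ns) (fun _ _ hij => hmono hij)
      fun i => hjump i.castSucc
    simp only [Fin.init] at hinit
    have hlast : c ≤ ∑ n ∈ Finset.Ico (ns (Fin.last m).castSucc) (ns (Fin.last (m + 1))),
        dist (u n) (u (n + 1)) := (hjump (Fin.last m)).trans (dist_le_Ico_sum_dist u hle)
    rw [← Finset.sum_range_add_sum_Ico _ hle]
    push_cast
    linarith [hinit, hlast]

theorem stmt4_general {K : Type*} [MetricSpace K] (F : K → ℝ)
    (δ : ℝ) (hδ : 0 < δ) (m : ℕ)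
    (hne : (oscDerivedSet F δ m).Nonempty)
    (g : ℕ → K → ℝ) (hg : ∀ n, Continuous (g n))
    (hlim : ∀ k, Tendsto (fun n => g n k) atTop (nhds (F k))) :
    (∃ (k : K) (ns : Fin (m+1) → ℕ), StrictMono ns ∧
      ∀ i : Fin m, δ / 4 < |g (ns i.succ) k - g (ns i.castSucc) k|) ∧
    ∀ C : ℝ, (∀ (k : K) (N : ℕ), ∑ n ∈ Finset.range N, |g (n+1) k - g n k| ≤ C) →
      (m : ℝ) * δ / 4 ≤ C := by
  obtain ⟨x, hx⟩ := hne
  obtain ⟨k, -, ns, -, hmono, hjump⟩ :=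
    exists_jumps_of_mem_oscDerivedSet hδ hg hlim m x hx 0 Set.univ Filter.univ_mem
  refine ⟨⟨k, ns, hmono, hjump⟩, fun C hC => ?_⟩
  have habs : ∀ a b, dist (g a k) (g b k) = |g b k - g a k| := fun a b => by
    rw [dist_comm, Real.dist_eq]
  calc (m : ℝ) * δ / 4 = m * (δ / 4) := by ring
    _ ≤ ∑ n ∈ Finset.range (ns (Fin.last m)), dist (g n k) (g (n + 1) k) :=
      mul_le_sum_range_dist (g · k) hmono.monotone fun i => (habs _ _).symm ▸ (hjump i).le
    _ ≤ C := by simpa only [habs] using hC k _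

/-- If `K_m(F,δ) ≠ ∅` then every sequence `(gₙ) ⊆ C(K)`, `g₀ ≡ 0`,
converging pointwise to `F` admits a point `k` and indices `n₁ < ⋯ < n_{m+1}` with
`|g_{n_{i+1}}(k) − g_{n_i}(k)| > δ/4` for `1 ≤ i ≤ m`; consequently
`sup_k Σₙ |g_{n+1}(k) − gₙ(k)| ≥ mδ/4`. -/
theorem stmt4 {K : Type*} [MetricSpace K] [CompactSpace K] (F : K → ℝ)
    (hFbd : ∃ C : ℝ, ∀ k, |F k| ≤ C) (δ : ℝ) (hδ : 0 < δ) (m : ℕ)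
    (hne : (oscDerivedSet F δ m).Nonempty)
    (g : ℕ → K → ℝ) (hg : ∀ n, Continuous (g n)) (hg0 : g 0 = 0)
    (hlim : ∀ k, Tendsto (fun n => g n k) atTop (nhds (F k))) :
    (∃ (k : K) (ns : Fin (m+1) → ℕ), StrictMono ns ∧
      ∀ i : Fin m, δ / 4 < |g (ns i.succ) k - g (ns i.castSucc) k|) ∧
    ∀ C : ℝ, (∀ (k : K) (N : ℕ), ∑ n ∈ Finset.range N, |g (n+1) k - g n k| ≤ C) →
      (m : ℝ) * δ / 4 ≤ C :=
  stmt4_general F δ hδ m hne g hg hlim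
end

section
/- Let K be a compact metric space and F : K → ℝ. For every ordinal α and all reals a < b, K_α(F; a, b) ⊆ K_α(F, b − a), where K_α(F; a, b) are the sets defined by K₀ = K, K_{α+1}(F;a,b) = closure(K_α ∩ [F ≤ a]) ∩ closure(K_α ∩ [F ≥ b]), with intersections at limit ordinals, and K_α(F, δ) are the oscillation derived sets with K_{α+1}(F,δ) = {k ∈ K_α(F,δ) : osc_{K_α(F,δ)}(F,k) ≥ δ}. -/
/-- The transfinite oscillation derived sets `K_α(F, δ)`. -/
noncomputable def oscDerivedSetO {K : Type*} [TopologicalSpace K] (F : K → ℝ) (δ : ℝ)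
    (o : Ordinal.{0}) : Set K :=
  Ordinal.limitRecOn o Set.univ
    (fun _ ih => {x ∈ ih | oscGE F ih x δ})
    (fun o _ ih => ⋂ (β : Set.Iio o), ih β.1 β.2)

/-- The transfinite separation derived sets `K_α(F; a, b)`. -/
noncomputable def sepDerivedSetO {K : Type*} [TopologicalSpace K] (F : K → ℝ) (a b : ℝ)
    (o : Ordinal.{0}) : Set K :=
  Ordinal.limitRecOn o Set.univ
    (fun _ ih => closure (ih ∩ {k | F k ≤ a}) ∩ closure (ih ∩ {k | b ≤ F k}))
    (fun o _ ih => ⋂ (β : Set.Iio o), ih β.1 β.2)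

/-!
Near a point of `closure (L ∩ [F ≤ a]) ∩ closure (L ∩ [F ≥ b])` every neighbourhood meets
`L` both where `F ≤ a` and where `F ≥ b`, so the oscillation of `F` on `L` there is at least
`b - a`.
Since the oscillation derived sets are closed, this step propagates through successor ordinals
by induction, and limit stages are intersections on both sides.
-/

section DerivedSets

variable {K : Type*} [TopologicalSpace K] (F : K → ℝ)

theorem isClosed_setOf_oscGE (L : Set K) (δ : ℝ) : IsClosed {x | oscGE F L x δ} := by
  refine isClosed_of_closure_subset fun x hx U hU η hη => ?_
  obtain ⟨V, hVU, hVopen, hxV⟩ := mem_nhds_iff.mp hU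
  obtain ⟨y, hyV, hy⟩ := mem_closure_iff.mp hx V hVopen hxV
  obtain ⟨p, hp, q, hq, hpq⟩ := hy V (hVopen.mem_nhds hyV) η hη
  exact ⟨p, ⟨hp.1, hVU hp.2⟩, q, ⟨hq.1, hVU hq.2⟩, hpq⟩

theorem oscGE_of_mem_closure_inter {L : Set K} {x : K} {a b : ℝ}
    (hlo : x ∈ closure (L ∩ {k | F k ≤ a})) (hhi : x ∈ closure (L ∩ {k | b ≤ F k})) :
    oscGE F L x (b - a) := by
  intro U hU η hη
  obtain ⟨y, hyU, hyL, hy⟩ := mem_closure_iff_nhds.mp hhi U hU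
  obtain ⟨z, hzU, hzL, hz⟩ := mem_closure_iff_nhds.mp hlo U hU
  have : b - a ≤ F y - F z := sub_le_sub hy hz
  exact ⟨y, ⟨hyL, hyU⟩, z, ⟨hzL, hzU⟩, by linarith⟩

theorem oscDerivedSetO_zero (δ : ℝ) : oscDerivedSetO F δ 0 = Set.univ :=
  Ordinal.limitRecOn_zero ..

theorem oscDerivedSetO_succ (δ : ℝ) (o : Ordinal.{0}) :
    oscDerivedSetO F δ (o + 1) =
      {x ∈ oscDerivedSetO F δ o | oscGE F (oscDerivedSetO F δ o) x δ} :=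
  Ordinal.limitRecOn_add_one ..

theorem oscDerivedSetO_limit (δ : ℝ) {o : Ordinal.{0}} (ho : Order.IsSuccLimit o) :
    oscDerivedSetO F δ o = ⋂ β : Set.Iio o, oscDerivedSetO F δ β :=
  Ordinal.limitRecOn_limit _ _ _ _ ho

theorem sepDerivedSetO_succ (a b : ℝ) (o : Ordinal.{0}) :
    sepDerivedSetO F a b (o + 1) =
      closure (sepDerivedSetO F a b o ∩ {k | F k ≤ a}) ∩
        closure (sepDerivedSetO F a b o ∩ {k | b ≤ F k}) :=
  Ordinal.limitRecOn_add_one ..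

theorem sepDerivedSetO_limit (a b : ℝ) {o : Ordinal.{0}} (ho : Order.IsSuccLimit o) :
    sepDerivedSetO F a b o = ⋂ β : Set.Iio o, sepDerivedSetO F a b β :=
  Ordinal.limitRecOn_limit _ _ _ _ ho

theorem isClosed_oscDerivedSetO (δ : ℝ) (o : Ordinal.{0}) :
    IsClosed (oscDerivedSetO F δ o) := by
  induction o using Ordinal.limitRecOn with
  | zero => simp only [oscDerivedSetO_zero, isClosed_univ]
  | add_one o ih =>
    rw [oscDerivedSetO_succ]
    exact ih.inter (isClosed_setOf_oscGE F _ δ)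
  | limit o ho ih =>
    rw [oscDerivedSetO_limit F δ ho]
    exact isClosed_iInter fun β => ih β.1 β.2

theorem sepDerivedSetO_subset_oscDerivedSetO (a b : ℝ) (o : Ordinal.{0}) :
    sepDerivedSetO F a b o ⊆ oscDerivedSetO F (b - a) o := by
  induction o using Ordinal.limitRecOn with
  | zero => simp only [oscDerivedSetO_zero, Set.subset_univ]
  | add_one o ih =>
    rw [sepDerivedSetO_succ, oscDerivedSetO_succ]
    rintro x ⟨hlo, hhi⟩
    have hclosure {s : Set K} :
        closure (sepDerivedSetO F a b o ∩ s) ⊆ oscDerivedSetO F (b - a) o :=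
      (closure_mono Set.inter_subset_left).trans
        ((isClosed_oscDerivedSetO F _ o).closure_subset_iff.mpr ih)
    refine ⟨hclosure hlo, oscGE_of_mem_closure_inter F ?_ ?_⟩
    · exact closure_mono (Set.inter_subset_inter_left _ ih) hlo
    · exact closure_mono (Set.inter_subset_inter_left _ ih) hhi
  | limit o ho ih =>
    rw [sepDerivedSetO_limit F a b ho, oscDerivedSetO_limit F _ ho]
    exact Set.iInter_mono fun β => ih β.1 β.2

end DerivedSets

theorem stmt5_general {K : Type*} [MetricSpace K] (F : K → ℝ)
    (a b : ℝ) (α : Ordinal.{0}) :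
    sepDerivedSetO F a b α ⊆ oscDerivedSetO F (b - a) α :=
  sepDerivedSetO_subset_oscDerivedSetO F a b α

/-- For every ordinal `α` and reals `a < b`,
`K_α(F; a, b) ⊆ K_α(F, b − a)`. -/
theorem stmt5 {K : Type*} [MetricSpace K] [CompactSpace K] (F : K → ℝ)
    (a b : ℝ) (hab : a < b) (α : Ordinal.{0}) :
    sepDerivedSetO F a b α ⊆ oscDerivedSetO F (b - a) α :=
  stmt5_general F a b α
end

section
/- Let C and D be convex subsets of a Banach space X, and let C̃, D̃ denote their weak* closures in X**. Then the minimum distance md(C, D) = inf{‖c − d‖ : c ∈ C, d ∈ D} equals md(C̃, D̃) computed with the norm of X**. -/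
/-! The canonical embedding `X → X**` is isometric and lands in the weak* closures, so
`md(C̃, D̃) ≤ md(C, D)`. Conversely, `C̃ - D̃` lies in the weak* closure of the convex set `C - D`,
which misses the open ball of radius `m = md(C, D)`. A Hahn–Banach functional `f` with `f < u` on
that ball and `u ≤ f` on `C - D` has `m‖f‖ ≤ u`, and the weak* closed half-space `{Φ | u ≤ Φ f}`
contains the weak* closure of `C - D`, so for its elements `F`, `m‖f‖ ≤ u ≤ F f ≤ ‖F‖‖f‖`. -/

open NormedSpace Metric Pointwise

section

variable {X : Type*} [NormedAddCommGroup X] [NormedSpace ℝ X]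

def weakStarClosure (A : Set X) : Set (StrongDual ℝ (StrongDual ℝ X)) :=
  StrongDual.toWeakDual ⁻¹' closure (StrongDual.toWeakDual '' (inclusionInDoubleDual ℝ X '' A))

theorem inclusionInDoubleDual_mem_weakStarClosure {A : Set X} {x : X} (hx : x ∈ A) :
    inclusionInDoubleDual ℝ X x ∈ weakStarClosure A :=
  Set.mem_preimage.2 (subset_closure ⟨_, ⟨x, hx, rfl⟩, rfl⟩)

@[simp]
theorem weakStarClosure_empty : weakStarClosure (∅ : Set X) = ∅ := by
  simp [weakStarClosure]

theorem sub_mem_weakStarClosure_sub {A B : Set X} {F G : StrongDual ℝ (StrongDual ℝ X)}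
    (hF : F ∈ weakStarClosure A) (hG : G ∈ weakStarClosure B) :
    F - G ∈ weakStarClosure (A - B) := by
  have hsub : StrongDual.toWeakDual (F - G) = StrongDual.toWeakDual F - StrongDual.toWeakDual G :=
    rfl
  rw [weakStarClosure, Set.mem_preimage, hsub, Set.image_sub, Set.image_sub]
  exact map_mem_closure₂ continuous_sub hF hG fun a ha b hb => Set.sub_mem_sub ha hb

theorem le_apply_of_mem_weakStarClosure {A : Set X} {F : StrongDual ℝ (StrongDual ℝ X)}
    (hF : F ∈ weakStarClosure A) {f : StrongDual ℝ X} {β : ℝ} (h : ∀ a ∈ A, β ≤ f a) :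
    β ≤ F f := by
  refine (isClosed_le continuous_const (WeakDual.eval_continuous f)).closure_subset_iff.2 ?_ hF
  rintro _ ⟨_, ⟨a, ha, rfl⟩, rfl⟩
  exact h a ha

theorem mul_norm_le_of_forall_lt_on_ball {f : StrongDual ℝ X} {m u : ℝ} (hm : 0 < m) (hf : ∀ x ∈ ball (0 : X) m, f x < u) :
    m * ‖f‖ ≤ u := by
  have hle : ∀ x ∈ closedBall (0 : X) m, f x ≤ u := by
    rw [← closure_ball 0 hm.ne']
    exact (isClosed_le f.continuous continuous_const).closure_subset_iff.2 fun x hx => (hf x hx).le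
  have habs : ∀ x ∈ closedBall (0 : X) m, ‖f x‖ ≤ u := fun x hx =>
    abs_le.2 ⟨neg_le.1 (by simpa using hle (-x) (by simpa using hx)), hle x hx⟩
  rw [mul_comm, ← le_div_iff₀ hm]
  exact f.opNorm_bound_of_ball_bound hm u habs

theorem le_norm_of_mem_weakStarClosure {K : Set X} (hK : Convex ℝ K)
    {F : StrongDual ℝ (StrongDual ℝ X)} (hF : F ∈ weakStarClosure K) {m : ℝ} (hm : ∀ k ∈ K, m ≤ ‖k‖) : m ≤ ‖F‖ := by
  rcases le_or_gt m 0 with hm0 | hm0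
  · exact hm0.trans (norm_nonneg F)
  have hdisj : Disjoint (ball (0 : X) m) K :=
    Set.disjoint_left.2 fun x hx hxK => (mem_ball_zero_iff.1 hx).not_ge (hm x hxK)
  obtain ⟨f, u, hball, hKf⟩ := geometric_hahn_banach_open (convex_ball 0 m) isOpen_ball hK hdisj
  have hu : 0 < u := by simpa using hball 0 (mem_ball_self hm0)
  have hFf : u ≤ ‖F‖ * ‖f‖ :=
    calc u ≤ F f := le_apply_of_mem_weakStarClosure hF hKf
      _ ≤ ‖F‖ * ‖f‖ := (Real.le_norm_self _).trans (F.le_opNorm f)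
  have hf : 0 < ‖f‖ := pos_of_mul_pos_right (hu.trans_le hFf) (norm_nonneg F)
  exact le_of_mul_le_mul_right ((mul_norm_le_of_forall_lt_on_ball hm0 hball).trans hFf) hf

end

theorem stmt11_general {X : Type*} [NormedAddCommGroup X] [NormedSpace ℝ X]
    (C D : Set X) (hC : Convex ℝ C) (hD : Convex ℝ D)
    (Ct Dt : Set (StrongDual ℝ (StrongDual ℝ X)))
    (hCt : Ct = {F | StrongDual.toWeakDual F ∈
      closure (StrongDual.toWeakDual '' ((inclusionInDoubleDual ℝ X) '' C))})
    (hDt : Dt = {F | StrongDual.toWeakDual F ∈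
      closure (StrongDual.toWeakDual '' ((inclusionInDoubleDual ℝ X) '' D))}) :
    sInf ((fun p : X × X => ‖p.1 - p.2‖) '' C ×ˢ D) =
      sInf ((fun p : StrongDual ℝ (StrongDual ℝ X) × StrongDual ℝ (StrongDual ℝ X) => ‖p.1 - p.2‖) '' Ct ×ˢ Dt) := by
  obtain rfl : Ct = weakStarClosure C := hCt
  obtain rfl : Dt = weakStarClosure D := hDt
  rcases C.eq_empty_or_nonempty with rfl | hCne
  · simp
  rcases D.eq_empty_or_nonempty with rfl | hDne
  · simp
  set S := (fun p : X × X => ‖p.1 - p.2‖) '' C ×ˢ D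
  set St := (fun p : StrongDual ℝ (StrongDual ℝ X) × StrongDual ℝ (StrongDual ℝ X) =>
    ‖p.1 - p.2‖) '' weakStarClosure C ×ˢ weakStarClosure D
  have hS : S.Nonempty := (hCne.prod hDne).image _
  have hSbdd : BddBelow S := ⟨0, by rintro _ ⟨p, -, rfl⟩; positivity⟩
  have hStbdd : BddBelow St := ⟨0, by rintro _ ⟨p, -, rfl⟩; positivity⟩
  have hSSt : S ⊆ St := by
    rintro _ ⟨⟨c, d⟩, ⟨hc, hd⟩, rfl⟩
    refine ⟨(inclusionInDoubleDual ℝ X c, inclusionInDoubleDual ℝ X d),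
      ⟨inclusionInDoubleDual_mem_weakStarClosure hc, inclusionInDoubleDual_mem_weakStarClosure hd⟩, ?_⟩
    show ‖inclusionInDoubleDual ℝ X c - inclusionInDoubleDual ℝ X d‖ = ‖c - d‖
    rw [← map_sub]
    exact (inclusionInDoubleDualLi ℝ).norm_map (c - d)
  refine le_antisymm (le_csInf (hS.mono hSSt) ?_) (csInf_le_csInf hStbdd hS hSSt)
  rintro _ ⟨⟨F, G⟩, ⟨hF, hG⟩, rfl⟩
  refine le_norm_of_mem_weakStarClosure (hC.sub hD) (sub_mem_weakStarClosure_sub hF hG) ?_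
  rintro _ ⟨c, hc, d, hd, rfl⟩
  exact csInf_le hSbdd ⟨(c, d), ⟨hc, hd⟩, rfl⟩

/-- For convex subsets `C, D` of a Banach space `X`, the minimum
distance `md(C, D)` equals `md(C̃, D̃)` where `C̃, D̃` are the weak* closures of
(the canonical images of) `C, D` in `X**`. -/
theorem stmt11 {X : Type*} [NormedAddCommGroup X] [NormedSpace ℝ X] [CompleteSpace X]
    (C D : Set X) (hC : Convex ℝ C) (hD : Convex ℝ D)
    (Ct Dt : Set (StrongDual ℝ (StrongDual ℝ X)))
    (hCt : Ct = {F | StrongDual.toWeakDual F ∈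
      closure (StrongDual.toWeakDual '' ((inclusionInDoubleDual ℝ X) '' C))})
    (hDt : Dt = {F | StrongDual.toWeakDual F ∈
      closure (StrongDual.toWeakDual '' ((inclusionInDoubleDual ℝ X) '' D))}) :
    sInf ((fun p : X × X => ‖p.1 - p.2‖) '' C ×ˢ D) =
      sInf ((fun p : StrongDual ℝ (StrongDual ℝ X) × StrongDual ℝ (StrongDual ℝ X) => ‖p.1 - p.2‖) '' Ct ×ˢ Dt) :=
  stmt11_general C D hC hD Ct Dt hCt hDt
end

section
/- Let (eₙ) be a basis of a Banach space such that there is a function M : ℝ⁺ → ℝ⁺ with ‖Σ aₙeₙ‖ ≤ M(ε)‖Σ aₙsₙ‖ + ε Σ|aₙ| for all finitely supported (aₙ) ⊆ ℝ and all ε > 0, where (sₙ) is the summing basis of c₀, i.e. ‖Σ aₙsₙ‖ = sup_k |Σᵢ₌₁^k aᵢ|. Then lim_{n→∞} (1/n)‖Σᵢ₌₁ⁿ (−1)ⁱ eᵢ‖ = 0; in particular (eₙ) is not equivalent to the unit vector basis of ℓ¹. -/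
/-!
Test the hypothesis on the alternating signs `aᵢ = (-1)ⁱ`, `1 ≤ i ≤ n`: their partial sums stay
in `[-1, 0]`, so the summing-basis norm is at most `1`, while `Σ |aᵢ| = n`. Hence
`‖Σᵢ₌₁ⁿ (-1)ⁱ eᵢ‖ ≤ M(ε) + ε n` for every `ε > 0`, which forces `‖Σᵢ₌₁ⁿ (-1)ⁱ eᵢ‖ / n → 0`.
An `ℓ¹` lower estimate would instead give `‖Σᵢ₌₁ⁿ (-1)ⁱ eᵢ‖ ≥ c n`.
-/

open Filter Finset

/-- Vanishes at `0`, so that sums over `range (n + 1)` are the sums over `Icc 1 n` of the theorem. -/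
noncomputable def alternatingSigns (i : ℕ) : ℝ := if i = 0 then 0 else (-1) ^ i

lemma sum_range_succ_alternatingSigns (k : ℕ) :
    ∑ i ∈ range (k + 1), alternatingSigns i = ((-1) ^ k - 1) / 2 := by
  induction k with
  | zero => simp [alternatingSigns]
  | succ k ih =>
    rw [sum_range_succ, ih, alternatingSigns, if_neg k.succ_ne_zero, pow_succ]
    ring

lemma abs_sum_range_alternatingSigns_le_one (k : ℕ) :
    |∑ i ∈ range k, alternatingSigns i| ≤ 1 := by
  cases k with
  | zero => simp
  | succ k =>
    rw [sum_range_succ_alternatingSigns]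
    rcases neg_one_pow_eq_or ℝ k with hk | hk <;> norm_num [hk]

lemma sum_range_succ_abs_alternatingSigns (n : ℕ) :
    ∑ i ∈ range (n + 1), |alternatingSigns i| = n := by
  induction n with
  | zero => simp [alternatingSigns]
  | succ n ih =>
    rw [sum_range_succ, ih]
    simp [alternatingSigns, abs_pow]

lemma sum_range_succ_alternatingSigns_smul {X : Type*} [AddCommGroup X] [Module ℝ X]
    (e : ℕ → X) (n : ℕ) :
    ∑ i ∈ range (n + 1), alternatingSigns i • e i = ∑ i ∈ Icc 1 n, (-1 : ℝ) ^ i • e i := by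
  rw [Nat.range_succ_eq_Icc_zero, ← insert_Icc_add_one_left_eq_Icc n.zero_le,
    sum_insert (by simp), alternatingSigns, if_pos rfl, zero_smul, zero_add]
  refine sum_congr rfl fun i hi => ?_
  rw [alternatingSigns, if_neg (by simp at hi; omega)]

lemma tendsto_one_div_mul_of_le_const_add_mul {f : ℕ → ℝ} (hf : ∀ n, 0 ≤ f n) {C : ℝ → ℝ}
    (hC : ∀ ε > 0, ∀ n : ℕ, f n ≤ C ε + ε * n) :
    Tendsto (fun n : ℕ => 1 / (n : ℝ) * f n) atTop (nhds 0) := by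
  rw [Metric.tendsto_atTop]
  intro ε hε
  have hsmall : ∀ᶠ n : ℕ in atTop, C (ε / 2) / n < ε / 2 :=
    (tendsto_const_div_atTop_nhds_zero_nat _).eventually (gt_mem_nhds (half_pos hε))
  obtain ⟨N, hN⟩ := eventually_atTop.1 (hsmall.and (eventually_ge_atTop 1))
  refine ⟨N, fun n hn => ?_⟩
  obtain ⟨hCn, hn1⟩ := hN n hn
  have hn0 : (0 : ℝ) < n := by exact_mod_cast hn1
  rw [Real.dist_eq, sub_zero, abs_of_nonneg (mul_nonneg (by positivity) (hf n))]
  calc 1 / (n : ℝ) * f n ≤ 1 / n * (C (ε / 2) + ε / 2 * n) := by gcongr; exact hC _ (half_pos hε) n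
    _ = C (ε / 2) / n + ε / 2 := by field_simp
    _ < ε := by linarith

theorem stmt12_general {X : Type*} [NormedAddCommGroup X] [NormedSpace ℝ X]
    (e : ℕ → X) (M : ℝ → ℝ)
    (h : ∀ ε > (0 : ℝ), ∀ (n : ℕ) (a : ℕ → ℝ) (S : ℝ),
      (∀ k ≤ n, |∑ i ∈ Finset.range k, a i| ≤ S) →
      ‖∑ i ∈ Finset.range n, a i • e i‖ ≤ M ε * S + ε * ∑ i ∈ Finset.range n, |a i|) :
    Tendsto (fun n : ℕ => (1 / (n : ℝ)) * ‖∑ i ∈ Finset.Icc 1 n, ((-1 : ℝ)) ^ i • e i‖)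
      atTop (nhds 0) ∧
    ¬ ∃ c > (0 : ℝ), ∀ (n : ℕ) (a : ℕ → ℝ),
      c * ∑ i ∈ Finset.range n, |a i| ≤ ‖∑ i ∈ Finset.range n, a i • e i‖ := by
  have hbound : ∀ ε > (0 : ℝ), ∀ n : ℕ, ‖∑ i ∈ Icc 1 n, (-1 : ℝ) ^ i • e i‖ ≤ M ε + ε * n := by
    intro ε hε n
    have := h ε hε (n + 1) alternatingSigns 1 fun k _ => abs_sum_range_alternatingSigns_le_one k
    rwa [sum_range_succ_alternatingSigns_smul, sum_range_succ_abs_alternatingSigns, mul_one]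
      at this
  have hlim := tendsto_one_div_mul_of_le_const_add_mul (fun _ => norm_nonneg _) hbound
  refine ⟨hlim, fun ⟨c, hc, hl1⟩ => ?_⟩
  have hlower : ∀ᶠ n : ℕ in atTop, c ≤ 1 / (n : ℝ) * ‖∑ i ∈ Icc 1 n, (-1 : ℝ) ^ i • e i‖ := by
    filter_upwards [eventually_ge_atTop 1] with n hn
    have := hl1 (n + 1) alternatingSigns
    rw [sum_range_succ_alternatingSigns_smul, sum_range_succ_abs_alternatingSigns] at this
    have hn0 : (0 : ℝ) < n := by exact_mod_cast hn
    rwa [one_div_mul_eq_div, le_div_iff₀ hn0]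
  linarith [ge_of_tendsto hlim hlower]

/-- If `(eₙ)` satisfies `‖Σ aₙeₙ‖ ≤ M(ε)‖Σ aₙsₙ‖ + ε Σ|aₙ|` for all
finitely supported scalars and every `ε > 0` (where `‖Σ aₙsₙ‖ = sup_k |Σ_{i≤k} aᵢ|`
is the summing basis norm), then `(1/n)‖Σᵢ₌₁ⁿ (−1)ⁱ eᵢ‖ → 0`; in particular `(eₙ)`
is not equivalent to the unit vector basis of `ℓ¹`. -/
theorem stmt12 {X : Type*} [NormedAddCommGroup X] [NormedSpace ℝ X] [CompleteSpace X]
    (e : ℕ → X) (M : ℝ → ℝ) (hM : ∀ ε > (0 : ℝ), 0 < M ε)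
    (h : ∀ ε > (0 : ℝ), ∀ (n : ℕ) (a : ℕ → ℝ) (S : ℝ),
      (∀ k ≤ n, |∑ i ∈ Finset.range k, a i| ≤ S) →
      ‖∑ i ∈ Finset.range n, a i • e i‖ ≤ M ε * S + ε * ∑ i ∈ Finset.range n, |a i|) :
    Tendsto (fun n : ℕ => (1 / (n : ℝ)) * ‖∑ i ∈ Finset.Icc 1 n, ((-1 : ℝ)) ^ i • e i‖)
      atTop (nhds 0) ∧
    ¬ ∃ c > (0 : ℝ), ∀ (n : ℕ) (a : ℕ → ℝ),
      c * ∑ i ∈ Finset.range n, |a i| ≤ ‖∑ i ∈ Finset.range n, a i • e i‖ :=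
  stmt12_general e M h
end

section
/- Let K be a compact metric space and F ∈ B₁(K) such that there exists a sequence (Kₙ) of closed subsets of K with Kₙ ⊆ K_{n+1}, K = ⋃ₙ Kₙ, and F restricted to each Kₙ continuous. Then there exists a uniformly bounded sequence (fₙ) ⊆ C(K) with ‖fₙ‖_∞ ≤ ‖F‖_∞ converging pointwise to F that is pointwise stabilizing: for each k ∈ K there exists m such that fₙ(k) = F(k) for all n ≥ m. -/
open Filter

/-- If `F ∈ B₁(K)` and there is an increasing sequence of closed sets
`Kₙ` with `K = ⋃ₙ Kₙ` and `F|_{Kₙ}` continuous, then there is a uniformly bounded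
(by `‖F‖_∞`) pointwise stabilizing sequence of continuous functions converging
pointwise to `F`. -/
theorem stmt13 {K : Type*} [MetricSpace K] [CompactSpace K] (F : K → ℝ)
    (hB1 : ∃ f : ℕ → K → ℝ, (∀ n, Continuous (f n)) ∧ (∃ C : ℝ, ∀ n k, |f n k| ≤ C) ∧
      ∀ k, Tendsto (fun n => f n k) atTop (nhds (F k)))
    (Ks : ℕ → Set K) (hcl : ∀ n, IsClosed (Ks n)) (hmono : ∀ n, Ks n ⊆ Ks (n + 1))
    (hunion : (⋃ n, Ks n) = Set.univ) (hcont : ∀ n, ContinuousOn F (Ks n)) :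
    ∃ f : ℕ → K → ℝ, (∀ n, Continuous (f n)) ∧
      (∀ C : ℝ, (∀ k, |F k| ≤ C) → ∀ n k, |f n k| ≤ C) ∧
      (∀ k, Tendsto (fun n => f n k) atTop (nhds (F k))) ∧
      ∀ k, ∃ m : ℕ, ∀ n ≥ m, f n k = F k := by
  -- F is bounded: obtain a bound from hB1
  obtain ⟨g0, -, ⟨C0, hC0⟩, hlim0⟩ := hB1
  have hFb : ∀ k, |F k| ≤ C0 := by
    intro k
    have : Tendsto (fun n => |g0 n k|) atTop (nhds |F k|) := (hlim0 k).abs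
    exact le_of_tendsto this (Eventually.of_forall fun n => hC0 n k)
  -- sup of |F|
  set M : ℝ := ⨆ k, |F k| with hM
  have hbdd : BddAbove (Set.range fun k => |F k|) := ⟨C0, by rintro x ⟨k, rfl⟩; exact hFb k⟩
  have hFM : ∀ k, |F k| ≤ M := fun k => le_ciSup hbdd k
  -- Tietze extensions
  have hext : ∀ n : ℕ, ∃ g : C(K, ℝ), ∀ k ∈ Ks n, g k = F k := by
    intro n
    obtain ⟨g, hg⟩ := ContinuousMap.exists_restrict_eq (hcl n)
      ⟨fun x : Ks n => F x, (hcont n).restrict⟩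
    refine ⟨g, fun k hk => ?_⟩
    have := congrFun (congrArg ContinuousMap.toFun hg) ⟨k, hk⟩
    exact this
  choose g hg using hext
  -- clamp
  set f : ℕ → K → ℝ := fun n k => max (-M) (min M (g n k)) with hf
  have hclampF : ∀ k, max (-M) (min M (F k)) = F k := by
    intro k
    have h1 : F k ≤ M := le_trans (le_abs_self _) (hFM k)
    have h2 : -M ≤ F k := neg_le_of_abs_le (hFM k)
    rw [min_eq_right h1, max_eq_right h2]
  have hmonoKs : Monotone Ks := monotone_nat_of_le_succ hmono
  have hmem : ∀ k : K, ∃ m, k ∈ Ks m := by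
    intro k
    have : k ∈ ⋃ n, Ks n := hunion ▸ Set.mem_univ k
    exact Set.mem_iUnion.mp this
  have hstab : ∀ k, ∃ m : ℕ, ∀ n ≥ m, f n k = F k := by
    intro k
    obtain ⟨m, hm⟩ := hmem k
    refine ⟨m, fun n hn => ?_⟩
    have hk : k ∈ Ks n := hmonoKs hn hm
    simp only [hf, hg n k hk]
    exact hclampF k
  refine ⟨f, ?_, ?_, ?_, hstab⟩
  · intro n
    exact continuous_const.max (continuous_const.min (g n).continuous)
  · intro C hC n k
    have : Nonempty K := ⟨k⟩
    have hMC : M ≤ C := ciSup_le fun k => hC k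
    have hM0 : (0 : ℝ) ≤ M := le_trans (abs_nonneg _) (hFM k)
    have h1 : f n k ≤ M := max_le (neg_le_self hM0) (min_le_left _ _)
    have h2 : -M ≤ f n k := le_max_left _ _
    exact abs_le.mpr ⟨le_trans (neg_le_neg hMC) h2, le_trans h1 hMC⟩
  · intro k
    obtain ⟨m, hm⟩ := hstab k
    exact tendsto_atTop_of_eventually_const hm
end

section
/- Let K be a compact metric space, F : K → ℝ bounded, and suppose F is the pointwise limit of a uniformly bounded pointwise stabilizing sequence of continuous functions. Then for every nonempty closed L ⊆ K, the restriction F|_L is continuous on a relatively open dense subset of L. -/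
open Filter

/-- If a bounded `F : K → ℝ` is the pointwise limit of a uniformly
bounded pointwise stabilizing sequence of continuous functions, then for every
nonempty closed `L ⊆ K`, `F|_L` is continuous on a relatively open dense subset
of `L`. -/
theorem stmt14 {K : Type*} [MetricSpace K] [CompactSpace K] (F : K → ℝ)
    (hbd : ∃ C : ℝ, ∀ k, |F k| ≤ C)
    (hPS : ∃ f : ℕ → K → ℝ, (∀ n, Continuous (f n)) ∧ (∃ C : ℝ, ∀ n k, |f n k| ≤ C) ∧
      ∀ k, ∃ m : ℕ, ∀ n ≥ m, f n k = F k) :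
    ∀ L : Set K, IsClosed L → L.Nonempty →
      ∃ U : Set K, U ⊆ L ∧ (∃ V : Set K, IsOpen V ∧ U = L ∩ V) ∧ L ⊆ closure U ∧
        ∀ x ∈ U, ContinuousWithinAt F L x := by
  obtain ⟨f, hfc, _hub, hstab⟩ := hPS
  intro L hL hLne
  haveI : CompactSpace L := isCompact_iff_compactSpace.mp hL.isCompact
  set E : ℕ → Set L := fun m => {y | ∀ n, m ≤ n → f n (y : K) = f m (y : K)} with hE
  have hEclosed : ∀ m, IsClosed (E m) := by
    intro m
    have : E m = ⋂ n, ⋂ _ : m ≤ n, {y : L | f n (y : K) = f m (y : K)} := by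
      ext y; simp [hE, Set.mem_iInter]
    rw [this]
    exact isClosed_iInter fun n => isClosed_iInter fun _ =>
      isClosed_eq ((hfc n).comp continuous_subtype_val)
        ((hfc m).comp continuous_subtype_val)
  have hEF : ∀ m, ∀ y ∈ E m, F (y : K) = f m (y : K) := by
    intro m y hy
    obtain ⟨m', hm'⟩ := hstab (y : K)
    have h1 := hy (max m m') (le_max_left _ _)
    have h2 := hm' (max m m') (le_max_right _ _)
    rw [← h2, h1]
  have hcover : (⋃ m, E m) = Set.univ := by
    ext y
    simp only [Set.mem_iUnion, Set.mem_univ, iff_true]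
    obtain ⟨m, hm⟩ := hstab (y : K)
    exact ⟨m, fun n hn => by rw [hm n hn, hm m le_rfl]⟩
  have hdense : Dense (⋃ m, interior (E m)) :=
    dense_iUnion_interior_of_closed hEclosed hcover
  -- pick open sets in K representing the relatively open interiors
  have hW : ∀ m, ∃ W : Set K, IsOpen W ∧ (Subtype.val ⁻¹' W : Set L) = interior (E m) := by
    intro m
    exact isOpen_induced_iff.mp isOpen_interior
  choose W hWopen hWpre using hW
  refine ⟨L ∩ ⋃ m, W m, Set.inter_subset_left, ⟨⋃ m, W m, isOpen_iUnion hWopen, rfl⟩, ?_, ?_⟩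
  · -- density
    intro x hx
    have hy : (⟨x, hx⟩ : L) ∈ closure (⋃ m, interior (E m)) := hdense.closure_eq ▸ Set.mem_univ _
    have himg : x ∈ closure (Subtype.val '' (⋃ m, interior (E m))) := by
      have := image_closure_subset_closure_image (s := ⋃ m, interior (E m))
        (continuous_subtype_val (p := fun x => x ∈ L))
      exact this ⟨⟨x, hx⟩, hy, rfl⟩
    refine closure_mono ?_ himg
    rintro z ⟨y, hyI, rfl⟩
    obtain ⟨m, hm⟩ := Set.mem_iUnion.mp hyI
    rw [← hWpre m] at hm
    exact ⟨y.2, Set.mem_iUnion.mpr ⟨m, hm⟩⟩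
  · -- continuity
    rintro x ⟨hxL, hxV⟩
    obtain ⟨m, hxW⟩ := Set.mem_iUnion.mp hxV
    have hxE : (⟨x, hxL⟩ : L) ∈ E m :=
      interior_subset (by rw [← hWpre m]; exact hxW)
    have hmem : L ∩ W m ∈ nhdsWithin x L :=
      inter_mem_nhdsWithin L ((hWopen m).mem_nhds hxW)
    have heq : F =ᶠ[nhdsWithin x L] f m := by
      filter_upwards [hmem] with z hz
      have hzE : (⟨z, hz.1⟩ : L) ∈ E m :=
        interior_subset (by rw [← hWpre m]; exact hz.2)
      exact hEF m _ hzE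
    exact ((hfc m).continuousWithinAt).congr_of_eventuallyEq heq (hEF m _ hxE)
end

section
/- Let K be a compact metric space, η a countable ordinal, and (K_α)_{α≤η} a decreasing family of closed subsets of K with K₀ = K, K_η = ∅, and K_γ = ⋂_{α<γ} K_α at limit ordinals γ, such that a bounded function F : K → ℝ is continuous on each difference K_α \ K_{α+1}. Then there exists an increasing sequence (Kₙ)ₙ∈ℕ of closed subsets of K with K = ⋃ₙ Kₙ and F|_{Kₙ} continuous for each n. -/
/-!
Every point `x` has a rank: the least `γ` with `x ∉ K_γ` is neither `0` (as `K₀ = K`) nor a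
limit (by the intersection property), so it is a successor `β + 1` and `x ∈ K_β \ K_{β+1}`.
Let `Kₙ` be the union over `α < η` of the points of `K_α` at distance `≥ 1/(n+1)` from the
closed set `K_{α+1}`. Near a point of rank `β`, the set `Kₙ` only meets its `β`-th piece,
which is closed and contained in `K_β \ K_{β+1}`; hence `Kₙ` is closed and `F` is continuous
on it. Every point lies in some `Kₙ` since its distance to `K_{β+1}` is positive.
-/

open Metric Set Filter Topology ENNReal Order

universe u

theorem exists_lt_mem_sdiff_succ {X : Type*} (Ks : Ordinal.{u} → Set X) {η : Ordinal.{u}}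
    (h0 : Ks 0 = univ) (hend : Ks η = ∅)
    (hlim : ∀ γ ≤ η, IsSuccLimit γ → Ks γ = ⋂ α : Iio γ, Ks α.1) (x : X) :
    ∃ β < η, x ∈ Ks β \ Ks (β + 1) := by
  set γ := sInf {α | x ∉ Ks α}
  have hγ : x ∉ Ks γ := csInf_mem (s := {α | x ∉ Ks α}) ⟨η, by simp [hend]⟩
  have hγη : γ ≤ η := csInf_le' (by simp [hend])
  have hbelow : ∀ α < γ, x ∈ Ks α := fun α hα =>
    not_not.1 (notMem_of_lt_csInf hα (OrderBot.bddBelow _))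
  rcases Ordinal.zero_or_succ_or_isSuccLimit γ with h | ⟨β, hβ⟩ | h
  · exact absurd (h0 ▸ mem_univ x) (h ▸ hγ)
  · have hβγ : β < γ := hβ ▸ lt_succ β
    exact ⟨β, hβγ.trans_le hγη, hbelow β hβγ, by rwa [← succ_eq_add_one, hβ]⟩
  · exact absurd (by rw [hlim γ hγη h]; exact mem_iInter.2 fun α => hbelow α α.2) hγ

section Layers

variable {X : Type*} [PseudoEMetricSpace X] (Ks : Ordinal.{u} → Set X)

def separatedLayer (ε : ℝ≥0∞) (α : Ordinal.{u}) : Set X :=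
  {x ∈ Ks α | ε ≤ infEDist x (Ks (α + 1))}

def separatedUnion (η : Ordinal.{u}) (ε : ℝ≥0∞) : Set X :=
  ⋃ α < η, separatedLayer Ks ε α

variable {Ks} {η α β : Ordinal.{u}} {ε ε' : ℝ≥0∞} {x y : X}

theorem isClosed_separatedLayer (h : IsClosed (Ks α)) : IsClosed (separatedLayer Ks ε α) :=
  h.inter (isClosed_le continuous_const continuous_infEDist)

theorem separatedLayer_subset_sdiff (hε : 0 < ε) :
    separatedLayer Ks ε α ⊆ Ks α \ Ks (α + 1) := fun _ hx =>
  ⟨hx.1, fun hmem => hε.not_ge (infEDist_zero_of_mem hmem ▸ hx.2)⟩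

theorem separatedUnion_mono (h : ε' ≤ ε) : separatedUnion Ks η ε ⊆ separatedUnion Ks η ε' :=
  iUnion₂_mono fun _ _ _ hx => ⟨hx.1, h.trans hx.2⟩

/-- A point of a lower layer `α < β` is `ε`-far from `K_{α+1} ∋ x`, and a point of a higher
layer lies in `K_{β+1}`; so only layer `β` comes close to `x`. -/
theorem mem_separatedLayer_of_edist_lt
    (hdec : ∀ α β : Ordinal, α ≤ β → β ≤ η → Ks β ⊆ Ks α) (hβ : β < η) (hx : x ∈ Ks β)
    (hy : y ∈ separatedUnion Ks η ε) (hyε : edist y x < ε)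
    (hyx : edist y x < infEDist x (Ks (β + 1))) : y ∈ separatedLayer Ks ε β := by
  obtain ⟨α, hα, hyα⟩ := mem_iUnion₂.1 hy
  rcases lt_trichotomy α β with h | rfl | h
  · have hxα : x ∈ Ks (α + 1) := hdec _ _ (add_one_le_of_lt h) hβ.le hx
    exact absurd (hyα.2.trans (infEDist_le_edist_of_mem hxα)) hyε.not_ge
  · exact hyα
  · have hyβ : y ∈ Ks (β + 1) := hdec _ _ (add_one_le_of_lt h) hα.le hyα.1
    exact absurd (edist_comm x y ▸ infEDist_le_edist_of_mem hyβ) hyx.not_ge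

theorem separatedLayer_mem_nhdsWithin
    (hdec : ∀ α β : Ordinal, α ≤ β → β ≤ η → Ks β ⊆ Ks α) (hβ : β < η)
    (hx : x ∈ Ks β \ Ks (β + 1)) (hcl : IsClosed (Ks (β + 1))) (hε : 0 < ε) :
    separatedLayer Ks ε β ∈ 𝓝[separatedUnion Ks η ε] x := by
  have hpos : 0 < infEDist x (Ks (β + 1)) :=
    pos_iff_ne_zero.2 fun h => hx.2 ((mem_iff_infEDist_zero_of_closed hcl).2 h)
  refine EMetric.mem_nhdsWithin_iff.2 ⟨min ε (infEDist x (Ks (β + 1))), lt_min hε hpos, ?_⟩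
  rintro y ⟨hyx, hy⟩
  have hyx := lt_min_iff.1 (mem_eball.1 hyx)
  exact mem_separatedLayer_of_edist_lt hdec hβ hx.1 hy hyx.1 hyx.2

theorem continuousOn_separatedUnion {Y : Type*} [TopologicalSpace Y] {F : X → Y}
    (hdec : ∀ α β : Ordinal, α ≤ β → β ≤ η → Ks β ⊆ Ks α)
    (hcl : ∀ α ≤ η, IsClosed (Ks α))
    (hcont : ∀ α < η, ContinuousOn F (Ks α \ Ks (α + 1))) (hε : 0 < ε) :
    ContinuousOn F (separatedUnion Ks η ε) := by
  intro x hx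
  obtain ⟨β, hβ, hxβ⟩ := mem_iUnion₂.1 hx
  have hxβ := separatedLayer_subset_sdiff hε hxβ
  have hL := separatedLayer_mem_nhdsWithin hdec hβ hxβ (hcl _ (add_one_le_of_lt hβ)) hε
  exact (hcont β hβ x hxβ).mono_of_mem_nhdsWithin
    (mem_of_superset hL (separatedLayer_subset_sdiff hε))

theorem isClosed_separatedUnion (hdec : ∀ α β : Ordinal, α ≤ β → β ≤ η → Ks β ⊆ Ks α)
    (hcl : ∀ α ≤ η, IsClosed (Ks α)) (hrank : ∀ x, ∃ β < η, x ∈ Ks β \ Ks (β + 1))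
    (hε : 0 < ε) : IsClosed (separatedUnion Ks η ε) := by
  refine isClosed_of_closure_subset fun x hx => ?_
  obtain ⟨β, hβ, hxβ⟩ := hrank x
  have hL := separatedLayer_mem_nhdsWithin hdec hβ hxβ (hcl _ (add_one_le_of_lt hβ)) hε
  have hxL : x ∈ closure (separatedLayer Ks ε β) := mem_closure_iff_nhdsWithin_neBot.2
    ((mem_closure_iff_nhdsWithin_neBot.1 hx).mono (nhdsWithin_le_of_mem hL))
  exact mem_iUnion₂.2 ⟨β, hβ, (isClosed_separatedLayer (hcl β hβ.le)).closure_subset hxL⟩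

theorem iUnion_separatedUnion_inv_succ (hcl : ∀ α ≤ η, IsClosed (Ks α))
    (hrank : ∀ x, ∃ β < η, x ∈ Ks β \ Ks (β + 1)) :
    ⋃ n : ℕ, separatedUnion Ks η ((n : ℝ≥0∞) + 1)⁻¹ = univ := by
  refine eq_univ_of_forall fun x => ?_
  obtain ⟨β, hβ, hxβ⟩ := hrank x
  have hpos : infEDist x (Ks (β + 1)) ≠ 0 := fun h =>
    hxβ.2 ((mem_iff_infEDist_zero_of_closed (hcl _ (add_one_le_of_lt hβ))).2 h)
  obtain ⟨n, hn⟩ := ENNReal.exists_inv_nat_lt hpos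
  have hle : ((n : ℝ≥0∞) + 1)⁻¹ ≤ infEDist x (Ks (β + 1)) :=
    (ENNReal.inv_le_inv.2 le_self_add).trans hn.le
  exact mem_iUnion.2 ⟨n, mem_iUnion₂.2 ⟨β, hβ, hxβ.1, hle⟩⟩

end Layers

theorem stmt15_general {K : Type*} [MetricSpace K] (F : K → ℝ)
    (η : Ordinal.{0})
    (Ks : Ordinal.{0} → Set K)
    (h0 : Ks 0 = Set.univ) (hend : Ks η = ∅)
    (hcl : ∀ α ≤ η, IsClosed (Ks α))
    (hdec : ∀ α β : Ordinal, α ≤ β → β ≤ η → Ks β ⊆ Ks α)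
    (hlim : ∀ γ ≤ η, Order.IsSuccLimit γ → Ks γ = ⋂ (α : Set.Iio γ), Ks α.1)
    (hcont : ∀ α < η, ContinuousOn F (Ks α \ Ks (α + 1))) :
    ∃ Kn : ℕ → Set K, (∀ n, IsClosed (Kn n)) ∧ (∀ n, Kn n ⊆ Kn (n + 1)) ∧
      (⋃ n, Kn n) = Set.univ ∧ ∀ n, ContinuousOn F (Kn n) := by
  have hrank := exists_lt_mem_sdiff_succ Ks h0 hend hlim
  have hε : ∀ n : ℕ, 0 < ((n : ℝ≥0∞) + 1)⁻¹ := fun n => ENNReal.inv_pos.2 (by simp)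
  refine ⟨fun n => separatedUnion Ks η ((n : ℝ≥0∞) + 1)⁻¹,
    fun n => isClosed_separatedUnion hdec hcl hrank (hε n),
    fun n => separatedUnion_mono ?_, iUnion_separatedUnion_inv_succ hcl hrank,
    fun n => continuousOn_separatedUnion hdec hcl hcont (hε n)⟩
  exact ENNReal.inv_le_inv.2 (by push_cast; exact le_self_add)

/-- Given a decreasing transfinite family `(K_α)_{α ≤ η}` (`η` countable)
of closed sets with `K₀ = K`, `K_η = ∅`, intersections at limits, and a bounded
`F : K → ℝ` continuous on each `K_α \ K_{α+1}`, there exists an increasing sequence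
`(Kₙ)` of closed sets with `K = ⋃ₙ Kₙ` and `F|_{Kₙ}` continuous for each `n`. -/
theorem stmt15 {K : Type*} [MetricSpace K] [CompactSpace K] (F : K → ℝ)
    (hbd : ∃ C : ℝ, ∀ k, |F k| ≤ C)
    (η : Ordinal.{0}) (hη : η.card ≤ Cardinal.aleph0)
    (Ks : Ordinal.{0} → Set K)
    (h0 : Ks 0 = Set.univ) (hend : Ks η = ∅)
    (hcl : ∀ α ≤ η, IsClosed (Ks α))
    (hdec : ∀ α β : Ordinal, α ≤ β → β ≤ η → Ks β ⊆ Ks α)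
    (hlim : ∀ γ ≤ η, Order.IsSuccLimit γ → Ks γ = ⋂ (α : Set.Iio γ), Ks α.1)
    (hcont : ∀ α < η, ContinuousOn F (Ks α \ Ks (α + 1))) :
    ∃ Kn : ℕ → Set K, (∀ n, IsClosed (Kn n)) ∧ (∀ n, Kn n ⊆ Kn (n + 1)) ∧
      (⋃ n, Kn n) = Set.univ ∧ ∀ n, ContinuousOn F (Kn n) :=
  stmt15_general F η Ks h0 hend hcl hdec hlim hcont
end

section
/- Define F : [0,1]^ℕ → ℝ by F(t₀,t₁,…) = sin(1/t₀) if t₀ ≠ 0, and F(t) = (1/(r+2)) sin(1/t_{r+1}) if t₀ = ⋯ = t_r = 0 ≠ t_{r+1}, and F(0,0,…) = 0. Then for every 0 < ε and m ∈ ℕ with K_m(F, ε) ≠ ∅ one has mε ≤ 2, while for every m ≥ 1 the derived set K_m(F, (2, 1, 2/3, …, 2/m)) with varying thresholds δᵢ = 2/i is nonempty (equal to {0}^m × [0,1]^{ℕ∖m}). Hence the indices |F|_{I'} = sup{mδ : K_m(F,δ) ≠ ∅} and |F|_I = sup{Σδᵢ : K_m(F,(δᵢ)) ≠ ∅} are not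 equivalent: |F|_{I'} ≤ 2 but |F|_I = ∞. -/
/-- Derived sets with varying thresholds `δ₁, δ₂, …`. -/
def oscDerivedSetSeq {K : Type*} [TopologicalSpace K] (F : K → ℝ) (δ : ℕ → ℝ) : ℕ → Set K
  | 0 => Set.univ
  | n + 1 => {x ∈ oscDerivedSetSeq F δ n | oscGE F (oscDerivedSetSeq F δ n) x (δ (n + 1))}

open Classical in
/-- The function `F` on the Hilbert cube `[0,1]^ℕ`: if `j` is the least index with
`t_j ≠ 0`, then `F(t) = (1/(j+1)) sin(1/t_j)`; `F(0,0,…) = 0`.  (For `t₀ ≠ 0` this is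
`sin(1/t₀)`, and for `t₀ = ⋯ = t_r = 0 ≠ t_{r+1}` it is `(1/(r+2)) sin(1/t_{r+1})`.) -/
noncomputable def hilbertCubeF (t : ℕ → ↥(Set.Icc (0 : ℝ) 1)) : ℝ :=
  if h : ∃ m, (t m : ℝ) ≠ 0 then
    (1 / ((Nat.find h : ℝ) + 1)) * Real.sin (1 / (t (Nat.find h) : ℝ))
  else 0

/-
For the upper bound: off the set `{t₀ = ⋯ = t_{j-1} = 0}` the function `F` is locally
`(1/(j+1)) sin(1/t_j)` for some `j`, hence continuous, so it has no positive oscillation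
there. By induction `K_j(F, ε)` lies in `{t₀ = ⋯ = t_{j-1} = 0}`, where `|F| ≤ 1/(j+1)`, so a
point of `K_{j+1}(F, ε)` forces `ε ≤ 2/(j+1)`.

For the lower bound: at a point with `t₀ = ⋯ = t_j = 0`, moving only the coordinate `t_j` to
`1/(π/2 + 2πk)` or `1/(3π/2 + 2πk)` gives points converging to it on which `F` is `±1/(j+1)`,
so the oscillation on `{t₀ = ⋯ = t_{j-1} = 0}` is `2/(j+1)`. Hence `{t₀ = ⋯ = t_{m-1} = 0}`
lies in `K_m(F, (2/i)ᵢ)`, and the thresholds sum to twice a harmonic sum.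
-/

open Real Filter Topology

namespace oscGE

variable {K : Type*} [TopologicalSpace K] {F : K → ℝ} {L : Set K} {x : K} {δ : ℝ}

lemma mono {L' : Set K} (hL : L ⊆ L') (h : oscGE F L x δ) : oscGE F L' x δ := by
  intro U hU η hη
  obtain ⟨y, hy, z, hz, hlt⟩ := h U hU η hη
  exact ⟨y, ⟨hL hy.1, hy.2⟩, z, ⟨hL hz.1, hz.2⟩, hlt⟩

lemma of_tendsto {ι : Type*} {l : Filter ι} [l.NeBot] {y z : ι → K}
    (hy : Tendsto y l (𝓝 x)) (hz : Tendsto z l (𝓝 x))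
    (hmem : ∀ i, y i ∈ L ∧ z i ∈ L ∧ δ ≤ F (y i) - F (z i)) : oscGE F L x δ := by
  intro U hU η hη
  obtain ⟨i, hyU, hzU⟩ := ((hy.eventually_mem hU).and (hz.eventually_mem hU)).exists
  obtain ⟨hyL, hzL, hle⟩ := hmem i
  exact ⟨y i, ⟨hyL, hyU⟩, z i, ⟨hzL, hzU⟩, hη.trans_le hle⟩

lemma le_two_mul_of_abs_le {c : ℝ} (hF : ∀ y ∈ L, |F y| ≤ c) (h : oscGE F L x δ) :
    δ ≤ 2 * c := by
  by_contra! hδ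
  obtain ⟨y, hy, z, hz, hlt⟩ := h Set.univ univ_mem (2 * c) hδ
  linarith [abs_le.1 (hF y hy.1), abs_le.1 (hF z hz.1)]

lemma nonpos_of_eqOn_of_continuousAt {g : K → ℝ} {U : Set K} (hU : U ∈ 𝓝 x)
    (hFg : Set.EqOn F g (L ∩ U)) (hg : ContinuousAt g x) (h : oscGE F L x δ) : δ ≤ 0 := by
  by_contra! hδ
  have hV : U ∩ g ⁻¹' Metric.ball (g x) (δ / 4) ∈ 𝓝 x :=
    inter_mem hU (hg (Metric.ball_mem_nhds _ (by positivity)))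
  obtain ⟨y, ⟨hyL, hyU, hyg⟩, z, ⟨hzL, hzU, hzg⟩, hlt⟩ := h _ hV (δ / 2) (by linarith)
  rw [hFg ⟨hyL, hyU⟩, hFg ⟨hzL, hzU⟩] at hlt
  have hy := abs_lt.1 (Real.dist_eq _ _ ▸ hyg : |g y - g x| < δ / 4)
  have hz := abs_lt.1 (Real.dist_eq _ _ ▸ hzg : |g z - g x| < δ / 4)
  linarith [hy.2, hz.1]

end oscGE

namespace HilbertCube

abbrev Cube := ℕ → Set.Icc (0 : ℝ) 1

def zeroPrefix (m : ℕ) : Set Cube := {t | ∀ j < m, (t j : ℝ) = 0}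

lemma zeroPrefix_anti {m n : ℕ} (h : m ≤ n) : zeroPrefix n ⊆ zeroPrefix m :=
  fun _ ht j hj => ht j (hj.trans_le h)

lemma zero_mem_zeroPrefix (m : ℕ) : (0 : Cube) ∈ zeroPrefix m := fun _ _ => rfl

open Classical in
lemma hilbertCubeF_eq {t : Cube} {m : ℕ} (ht : t ∈ zeroPrefix m) (hm : (t m : ℝ) ≠ 0) :
    hilbertCubeF t = 1 / ((m : ℝ) + 1) * sin (1 / (t m : ℝ)) := by
  have hex : ∃ k, (t k : ℝ) ≠ 0 := ⟨m, hm⟩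
  have hfind : Nat.find hex = m :=
    (Nat.find_eq_iff hex).2 ⟨hm, fun j hj => not_not.2 (ht j hj)⟩
  rw [hilbertCubeF, dif_pos hex, hfind]

open Classical in
lemma abs_hilbertCubeF_le {t : Cube} {m : ℕ} (ht : t ∈ zeroPrefix m) :
    |hilbertCubeF t| ≤ 1 / ((m : ℝ) + 1) := by
  by_cases hex : ∃ k, (t k : ℝ) ≠ 0
  · have hm : m ≤ Nat.find hex := by
      by_contra! hlt
      exact Nat.find_spec hex (ht _ hlt)
    rw [hilbertCubeF, dif_pos hex, abs_mul, abs_of_pos (by positivity)]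
    calc 1 / ((Nat.find hex : ℝ) + 1) * |sin _| ≤ 1 / ((Nat.find hex : ℝ) + 1) * 1 := by
          gcongr; exact abs_sin_le_one _
      _ ≤ 1 / ((m : ℝ) + 1) := by rw [mul_one]; gcongr
  · rw [hilbertCubeF, dif_neg hex, abs_zero]
    positivity

noncomputable def sinPreimage (c : ℝ) (k : ℕ) : ℝ := (c + k * (2 * π))⁻¹

lemma sinPreimage_pos {c : ℝ} (hc : 0 < c) (k : ℕ) : 0 < sinPreimage c k := by
  unfold sinPreimage; positivity

lemma sinPreimage_mem_Icc {c : ℝ} (hc : 1 ≤ c) (k : ℕ) :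
    sinPreimage c k ∈ Set.Icc (0 : ℝ) 1 :=
  ⟨(sinPreimage_pos (by linarith) k).le,
    inv_le_one_of_one_le₀ (le_add_of_le_of_nonneg hc (by positivity))⟩

lemma sin_one_div_sinPreimage (c : ℝ) (k : ℕ) : sin (1 / sinPreimage c k) = sin c := by
  rw [sinPreimage, one_div, inv_inv, sin_add_nat_mul_two_pi]

lemma tendsto_sinPreimage (c : ℝ) : Tendsto (sinPreimage c) atTop (𝓝 0) :=
  (tendsto_atTop_add_const_left _ c
    (tendsto_natCast_atTop_atTop.atTop_mul_const (by positivity))).inv_tendsto_atTop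

noncomputable def perturb (x : Cube) (n : ℕ) {c : ℝ} (hc : 1 ≤ c) (k : ℕ) : Cube :=
  Function.update x n ⟨sinPreimage c k, sinPreimage_mem_Icc hc k⟩

lemma tendsto_perturb {x : Cube} {n : ℕ} (hx : (x n : ℝ) = 0) {c : ℝ} (hc : 1 ≤ c) :
    Tendsto (perturb x n hc) atTop (𝓝 x) := by
  have hcoord : Tendsto
      (fun k => (⟨sinPreimage c k, sinPreimage_mem_Icc hc k⟩ : Set.Icc (0 : ℝ) 1))
      atTop (𝓝 (x n)) := tendsto_subtype_rng.2 (by rw [hx]; exact tendsto_sinPreimage c)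
  have h := (tendsto_const_nhds (x := x)).update n hcoord
  rwa [Function.update_eq_self] at h

lemma perturb_mem_zeroPrefix {x : Cube} {n : ℕ} (hx : x ∈ zeroPrefix n) {c : ℝ} (hc : 1 ≤ c)
    (k : ℕ) : perturb x n hc k ∈ zeroPrefix n := by
  intro j hj
  rw [perturb, Function.update_of_ne hj.ne]
  exact hx j hj

lemma hilbertCubeF_perturb {x : Cube} {n : ℕ} (hx : x ∈ zeroPrefix n) {c : ℝ} (hc : 1 ≤ c)
    (k : ℕ) : hilbertCubeF (perturb x n hc k) = 1 / ((n : ℝ) + 1) * sin c := by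
  have hn : (perturb x n hc k n : ℝ) = sinPreimage c k := by rw [perturb, Function.update_self]
  have hn₀ : (perturb x n hc k n : ℝ) ≠ 0 := hn ▸ (sinPreimage_pos (by linarith) k).ne'
  rw [hilbertCubeF_eq (perturb_mem_zeroPrefix hx hc k) hn₀, hn, sin_one_div_sinPreimage]

lemma oscGE_hilbertCubeF_zeroPrefix {n : ℕ} {x : Cube} (hx : x ∈ zeroPrefix (n + 1)) :
    oscGE hilbertCubeF (zeroPrefix n) x (2 / ((n : ℝ) + 1)) := by
  have hxn : x ∈ zeroPrefix n := zeroPrefix_anti n.le_succ hx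
  have h₁ : (1 : ℝ) ≤ π / 2 := by linarith [pi_gt_three]
  have h₂ : (1 : ℝ) ≤ π / 2 + π := by linarith [pi_gt_three]
  refine oscGE.of_tendsto (tendsto_perturb (hx n n.lt_succ_self) h₁)
    (tendsto_perturb (hx n n.lt_succ_self) h₂) fun k =>
      ⟨perturb_mem_zeroPrefix hxn h₁ k, perturb_mem_zeroPrefix hxn h₂ k, ?_⟩
  rw [hilbertCubeF_perturb hxn, hilbertCubeF_perturb hxn, sin_add_pi, sin_pi_div_two]
  exact le_of_eq (by ring)

lemma zeroPrefix_subset_oscDerivedSetSeq (m : ℕ) :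
    zeroPrefix m ⊆ oscDerivedSetSeq hilbertCubeF (fun i => 2 / (i : ℝ)) m := by
  induction m with
  | zero => exact Set.subset_univ _
  | succ n ih =>
    intro x hx
    refine ⟨ih (zeroPrefix_anti n.le_succ hx), ?_⟩
    simpa using (oscGE_hilbertCubeF_zeroPrefix hx).mono ih

lemma oscDerivedSet_subset_zeroPrefix {ε : ℝ} (hε : 0 < ε) (m : ℕ) :
    oscDerivedSet hilbertCubeF ε m ⊆ zeroPrefix m := by
  induction m with
  | zero => exact fun _ _ _ hj => absurd hj (Nat.not_lt_zero _)
  | succ n ih =>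
    rintro x ⟨hxK, hosc⟩ j hj
    rcases Nat.lt_succ_iff_lt_or_eq.1 hj with hj | rfl
    · exact ih hxK j hj
    by_contra hne
    have hcoord : Continuous fun t : Cube => (t j : ℝ) :=
      continuous_subtype_val.comp (continuous_apply j)
    have hg : ContinuousAt (fun t : Cube => 1 / ((j : ℝ) + 1) * sin (1 / (t j : ℝ))) x :=
      continuousAt_const.mul (continuous_sin.continuousAt.comp
        (continuousAt_const.div hcoord.continuousAt hne))
    exact hε.not_ge <| hosc.nonpos_of_eqOn_of_continuousAt
      ((isOpen_compl_singleton.preimage hcoord).mem_nhds hne)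
      (fun t ht => hilbertCubeF_eq (ih ht.1) ht.2) hg

lemma succ_mul_le_two_of_mem_oscDerivedSet {ε : ℝ} (hε : 0 < ε) {n : ℕ} {x : Cube}
    (hx : x ∈ oscDerivedSet hilbertCubeF ε (n + 1)) : ((n : ℝ) + 1) * ε ≤ 2 := by
  have h := hx.2.le_two_mul_of_abs_le fun y hy =>
    abs_hilbertCubeF_le (oscDerivedSet_subset_zeroPrefix hε n hy)
  rw [mul_one_div, le_div_iff₀ (by positivity)] at h
  linarith

end HilbertCube

lemma tendsto_sum_range_two_div_nat_succ_atTop :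
    Tendsto (fun n => ∑ i ∈ Finset.range n, 2 / ((i : ℝ) + 1)) atTop atTop := by
  simpa only [Finset.mul_sum, mul_one_div] using
    Real.tendsto_sum_range_one_div_nat_succ_atTop.const_mul_atTop two_pos

open HilbertCube in
/-- For `F` as above on the Hilbert cube: `K_m(F, ε) ≠ ∅` implies
`mε ≤ 2` (so `|F|_{I'} ≤ 2`), while `K_m(F, (2/i)ᵢ) ≠ ∅` for all `m ≥ 1`, and the
sums `Σᵢ₌₁^m 2/i` are unbounded (so `|F|_I = ∞`): the indices `|·|_{I'}` and
`|·|_I` are not equivalent. -/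
theorem stmt18 :
    (∀ ε > (0 : ℝ), ∀ m : ℕ, (oscDerivedSet hilbertCubeF ε m).Nonempty → (m : ℝ) * ε ≤ 2) ∧
    (∀ m : ℕ, 1 ≤ m → (oscDerivedSetSeq hilbertCubeF (fun i => 2 / (i : ℝ)) m).Nonempty) ∧
    (∀ C : ℝ, ∃ m : ℕ, (oscDerivedSetSeq hilbertCubeF (fun i => 2 / (i : ℝ)) m).Nonempty ∧
      C < ∑ i ∈ Finset.range m, 2 / ((i : ℝ) + 1)) := by
  have hnonempty (m : ℕ) : (oscDerivedSetSeq hilbertCubeF (fun i => 2 / (i : ℝ)) m).Nonempty :=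
    ⟨0, zeroPrefix_subset_oscDerivedSetSeq m (zero_mem_zeroPrefix m)⟩
  refine ⟨?_, fun m _ => hnonempty m, fun C => ?_⟩
  · rintro ε hε (_ | n) ⟨x, hx⟩
    · simp
    · exact_mod_cast succ_mul_le_two_of_mem_oscDerivedSet hε hx
  · obtain ⟨m, hm⟩ := (tendsto_sum_range_two_div_nat_succ_atTop.eventually_gt_atTop C).exists
    exact ⟨m, hnonempty m, hm⟩
end
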